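/- Let M be an infinite mutually algebraic structure and ψ(x̄,y) := ⋀_{i∈I} R_i(x̄_i,y) ∧ ⋀_{j∈J} ¬R_j(x̄_j,y) with I nonempty and each R_i, R_j quantifier-free mutually algebraic with y occurring in each. Let x̄' be the smallest subsequence of x̄ containing all x̄_i (i ∈ I), and K = {j ∈ J : x̄_j ⊆ x̄'}. Then θ(x̄',y) := ⋀_{i∈I} R_i(x̄_i,y) ∧ ⋀_{j∈K} ¬R_j(x̄_j,y) is quantifier-free mutually algebraic, and T(M) ⊨ ∀y (∃x̄ ψ(x̄,y) ↔ ∃x̄' θ(x̄',y)). -/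

import Mathlib

/-
Every variable of `θ` occurs in some `x̄_i` together with `y`. Once `y` is fixed, the mutually
algebraic `R_i` leave only boundedly many choices for the remaining variables; and if `y` is
free while some other variable is fixed, the `R_i` containing that variable leaves only
boundedly many values for `y`. Hence `θ` is mutually algebraic.

Conversely, a solution `x̄'` of `θ` in `M` extends to a solution of `ψ` by giving all remaining
variables one common value `c`: for `j ∉ K` some variable of `x̄_j` is such a variable, so by
mutual algebraicity of `R_j` only finitely many `c` make `R_j` true, and `M` is infinite. The
implication `∀y (∃x̄' θ → ∃x̄ ψ)` is then a sentence of `T(M)` and holds in all its models.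
-/

open FirstOrder Language Set

open Classical in
/-- Combine assignments on a set and its complement into one assignment. -/
noncomputable def combine {M α : Type} (s : Set α) (u : ↥s → M) (v : ↥sᶜ → M) : α → M :=
  fun a => if h : a ∈ s then u ⟨a, h⟩ else v ⟨a, h⟩

/-- `φ` is a mutually algebraic `L(M)`-formula: for some `N`, for every proper partition of its
free variables into nonempty `x̄` (indexed by `s`) and `ȳ` (indexed by `sᶜ`),
`M ⊨ ∀ ȳ ∃^{≤N} x̄ φ(x̄,ȳ)`. -/
def IsMA (L : Language) (M : Type) [L.Structure M] {α : Type} (φ : (L[[M]]).Formula α) : Prop :=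
  ∃ N : ℕ, ∀ s : Set α, s.Nonempty → sᶜ.Nonempty → ∀ v : ↥sᶜ → M,
    {u : ↥s → M | φ.Realize (combine s u v)}.encard ≤ (N : ℕ∞)

/-- `T(M)`-equivalence of `L(M)`-formulas: equivalence in every model of the elementary
diagram `T(M)`. -/
def TEquiv (L : Language) (M : Type) [L.Structure M] {α : Type} (φ ψ : (L[[M]]).Formula α) : Prop :=
  ∀ (N : Type) [(L[[M]]).Structure N], N ⊨ L.elementaryDiagram M →
    ∀ v : α → N, φ.Realize v ↔ ψ.Realize v

/-- A partial equality diagram: a Boolean combination of equalities between variables. -/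
inductive IsPED {L' : Language} {α : Type} : L'.Formula α → Prop
  | eq (a b : α) : IsPED (Term.equal (Term.var a) (Term.var b))
  | not {φ : L'.Formula α} : IsPED φ → IsPED φ.not
  | inf {φ ψ : L'.Formula α} : IsPED φ → IsPED ψ → IsPED (φ ⊓ ψ)
  | sup {φ ψ : L'.Formula α} : IsPED φ → IsPED ψ → IsPED (φ ⊔ ψ)

/-- Positive Boolean combinations of formulas satisfying `P`. -/
inductive PosComb {L' : Language} {α : Type} (P : L'.Formula α → Prop) : L'.Formula α → Prop
  | base {φ : L'.Formula α} : P φ → PosComb P φ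
  | inf {φ ψ : L'.Formula α} : PosComb P φ → PosComb P ψ → PosComb P (φ ⊓ ψ)
  | sup {φ ψ : L'.Formula α} : PosComb P φ → PosComb P ψ → PosComb P (φ ⊔ ψ)

/-- Boolean combinations of formulas satisfying `P`. -/
inductive BoolComb {L' : Language} {α : Type} (P : L'.Formula α → Prop) : L'.Formula α → Prop
  | base {φ : L'.Formula α} : P φ → BoolComb P φ
  | not {φ : L'.Formula α} : BoolComb P φ → BoolComb P φ.not
  | inf {φ ψ : L'.Formula α} : BoolComb P φ → BoolComb P ψ → BoolComb P (φ ⊓ ψ)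
  | sup {φ ψ : L'.Formula α} : BoolComb P φ → BoolComb P ψ → BoolComb P (φ ⊔ ψ)

/-- `θ(ȳ,z̄)` is a preferred formula: (modulo `T(M)`) it has the form `∃x̄ (R(x̄,ȳ) ∧ S(x̄,ȳ,z̄))`
where the `ȳ`-variables (indexed by the nonempty set `s`) and `z̄`-variables (indexed by `sᶜ`)
partition its free variables, `R` is quantifier-free and mutually algebraic, and `S` is a
partial equality diagram. -/
def IsPreferred (L : Language) (M : Type) [L.Structure M] {α : Type}
    (θ : (L[[M]]).Formula α) : Prop :=
  ∃ (s : Set α) (n : ℕ) (R : (L[[M]]).Formula (Fin n ⊕ ↥s)) (S : (L[[M]]).Formula (Fin n ⊕ α)),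
    s.Nonempty ∧ R.IsQF ∧ IsMA L M R ∧ IsPED S ∧
    ∀ (N : Type) [(L[[M]]).Structure N], N ⊨ L.elementaryDiagram M →
      ∀ v : α → N, θ.Realize v ↔
        ∃ u : Fin n → N, R.Realize (Sum.elim u (fun a : ↥s => v ↑a)) ∧ S.Realize (Sum.elim u v)

/-- The class `𝒫`: formulas `T(M)`-equivalent to a positive Boolean combination of preferred
formulas. -/
def InP (L : Language) (M : Type) [L.Structure M] {α : Type} (φ : (L[[M]]).Formula α) : Prop :=
  ∃ ψ : (L[[M]]).Formula α, PosComb (IsPreferred L M) ψ ∧ TEquiv L M φ ψ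

/-- `φ` is (a formula with dummy variables added to) a mutually algebraic formula in a subtuple
of the variables. -/
def IsMASub (L : Language) (M : Type) [L.Structure M] {α : Type}
    (φ : (L[[M]]).Formula α) : Prop :=
  ∃ (s : Set α) (ψ : (L[[M]]).Formula ↥s), IsMA L M ψ ∧ φ = ψ.relabel (fun a : ↥s => ↑a)

/-- `M` is a mutually algebraic structure: every `L(M)`-formula is `T(M)`-equivalent to a
Boolean combination of mutually algebraic formulas (in subtuples of its variables). -/
def IsMAStructure (L : Language) (M : Type) [L.Structure M] : Prop :=
  ∀ (n : ℕ) (φ : (L[[M]]).Formula (Fin n)),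
    ∃ ψ : (L[[M]]).Formula (Fin n), BoolComb (IsMASub L M) ψ ∧ TEquiv L M φ ψ

/-- The elementary diagram `T(M)` is model complete: every `L(M)`-formula is `T(M)`-equivalent
to an existential formula. -/
def IsModelComplete (L : Language) (M : Type) [L.Structure M] : Prop :=
  ∀ (n : ℕ) (φ : (L[[M]]).Formula (Fin n)),
    ∃ (k : ℕ) (ψ : (L[[M]]).Formula (Fin k ⊕ Fin n)), ψ.IsQF ∧
      ∀ (N : Type) [(L[[M]]).Structure N], N ⊨ L.elementaryDiagram M →
        ∀ v : Fin n → N, φ.Realize v ↔ ∃ u : Fin k → N, ψ.Realize (Sum.elim u v)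

/-- The conjunction of a finite set of formulas, as `BoundedFormula.iInf` was defined in the older
Mathlib (taking a `Finset`). -/
noncomputable def finsetIInf {L : Language} {α β : Type} {n : ℕ} (s : Finset β) (f : β → L.BoundedFormula α n) :
    L.BoundedFormula α n :=
  (s.toList.map f).foldr (· ⊓ ·) ⊤

theorem combine_of_mem {M α : Type} {s : Set α} {u : ↥s → M} {v : ↥sᶜ → M} {a : α} (h : a ∈ s) :
    combine s u v a = u ⟨a, h⟩ :=
  dif_pos h

theorem combine_of_notMem {M α : Type} {s : Set α} {u : ↥s → M} {v : ↥sᶜ → M} {a : α}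
    (h : a ∉ s) : combine s u v a = v ⟨a, h⟩ :=
  dif_neg h

theorem Set.encard_le_mul_of_encard_fiber_le {δ ε : Type*} {A : Set δ} {f : δ → ε} {a b : ℕ}
    (himage : (f '' A).encard ≤ a) (hfiber : ∀ m, (A ∩ f ⁻¹' {m}).encard ≤ b) :
    A.encard ≤ a * b := by
  have hcover : A ⊆ ⋃ m ∈ f '' A, A ∩ f ⁻¹' {m} := fun x hx =>
    mem_biUnion (mem_image_of_mem f hx) ⟨hx, rfl⟩
  have hfin : A.Finite :=
    ((finite_of_encard_le_coe himage).biUnion fun m _ => finite_of_encard_le_coe (hfiber m)).subset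
      hcover
  classical
  have hfiber' : ∀ m ∈ hfin.toFinset.image f, (hfin.toFinset.filter (f · = m)).card ≤ b := by
    intro m _
    have := hfiber m
    rw [← Nat.cast_le (α := ℕ∞), ← encard_coe_eq_coe_finsetCard]
    have hset : (↑(hfin.toFinset.filter (f · = m)) : Set δ) = A ∩ f ⁻¹' {m} := by ext; simp
    rwa [hset]
  have himage' : (hfin.toFinset.image f).card ≤ a := by
    rw [← Nat.cast_le (α := ℕ∞), ← encard_coe_eq_coe_finsetCard]
    simpa using himage
  rw [hfin.encard_eq_coe_toFinset_card, mul_comm]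
  exact_mod_cast (Finset.card_le_mul_card_image _ b hfiber').trans (Nat.mul_le_mul_left b himage')

section MutualAlgebraicity

variable {L : Language} {M : Type} [L.Structure M] {β : Type}

theorem isMA_iff {φ : (L[[M]]).Formula β} :
    IsMA L M φ ↔ ∃ N : ℕ, ∀ t : Set β, t.Nonempty → tᶜ.Nonempty → ∀ w : β → M,
      {z | φ.Realize z ∧ EqOn z w t}.encard ≤ N := by
  constructor
  · rintro ⟨N, hN⟩
    refine ⟨N, fun t ht htc w => le_trans ?_ (hN tᶜ htc (by simpa using ht) fun x => w x)⟩
    refine encard_le_encard_of_injOn (f := fun z x => z x) ?_ ?_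
    · rintro z ⟨hz, hzw⟩
      have hcomb : combine tᶜ (fun x : ↥tᶜ => z x) (fun x => w x) = z := by
        funext a
        by_cases ha : a ∈ t
        · rw [combine_of_notMem (not_not_intro ha)]; exact (hzw ha).symm
        · exact combine_of_mem ha
      simpa only [mem_ofPred_eq, hcomb] using hz
    · rintro z ⟨-, hz⟩ z' ⟨-, hz'⟩ h
      funext a
      by_cases ha : a ∈ t
      · rw [hz ha, hz' ha]
      · exact congrFun h ⟨a, ha⟩
  · rintro ⟨N, hN⟩
    refine ⟨N, fun s hs hsc v => ?_⟩
    obtain ⟨a₀, ha₀⟩ := hsc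
    refine le_trans ?_ (hN sᶜ ⟨a₀, ha₀⟩ (by simpa using hs) (combine s (fun _ => v ⟨a₀, ha₀⟩) v))
    refine encard_le_encard_of_injOn (f := fun u => combine s u v) ?_ ?_
    · exact fun u hu => ⟨hu, fun a ha => by simp only [combine_of_notMem ha]⟩
    · intro u _ u' _ h
      funext a
      simpa only [combine_of_mem a.2] using congrFun h a

theorem IsMA.exists_encard_le {φ : (L[[M]]).Formula β} (h : IsMA L M φ) :
    ∃ N : ℕ, ∀ t : Set β, t.Nonempty → ∀ w : β → M,
      {z | φ.Realize z ∧ EqOn z w t}.encard ≤ N := by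
  obtain ⟨N, hN⟩ := isMA_iff.1 h
  refine ⟨N + 1, fun t ht w => ?_⟩
  rcases tᶜ.eq_empty_or_nonempty with htc | htc
  · have hsub : {z | φ.Realize z ∧ EqOn z w t} ⊆ {w} := fun z hz =>
      funext fun a => hz.2 (compl_empty_iff.1 htc ▸ mem_univ a)
    calc _ ≤ ({w} : Set (β → M)).encard := encard_le_encard hsub
      _ ≤ _ := by simp
  · exact (hN t ht htc w).trans (by simp)

theorem encard_setOf_realize_eqOn_le_prod {ι : Type} [Fintype ι] {γ : ι → Type}
    {φ : ∀ i, (L[[M]]).Formula (γ i)} {N : ι → ℕ}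
    (hN : ∀ i (t : Set (γ i)), t.Nonempty → ∀ w : γ i → M,
      {z | (φ i).Realize z ∧ EqOn z w t}.encard ≤ N i)
    (g : ∀ i, γ i → β) (y : β) (hy : ∀ i, y ∈ range (g i)) (hcover : ∀ x, ∃ i, x ∈ range (g i))
    {χ : (L[[M]]).Formula β} (hχ : ∀ w : β → M, χ.Realize w → ∀ i, (φ i).Realize (w ∘ g i))
    (t : Set β) (hyt : y ∈ t) (w : β → M) :
    {z | χ.Realize z ∧ EqOn z w t}.encard ≤ ∏ i, N i := by
  have hinj : Function.Injective fun (z : β → M) i => z ∘ g i := by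
    intro z z' h
    funext x
    obtain ⟨i, x', rfl⟩ := hcover x
    exact congrFun (congrFun h i) x'
  calc _ ≤ (Set.pi univ fun i =>
          {z : γ i → M | (φ i).Realize z ∧ EqOn z (w ∘ g i) (g i ⁻¹' t)}).encard :=
        encard_le_encard_of_injOn (fun z hz i _ => ⟨hχ z hz.1 i, fun _ hx => hz.2 hx⟩)
          hinj.injOn
    _ ≤ ∏ i, (N i : ℕ∞) := by
        rw [encard_pi_eq_prod_encard]
        refine Finset.prod_le_prod' fun i _ => hN i _ ?_ _
        obtain ⟨y', hy'⟩ := hy i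
        exact ⟨y', by simpa [hy'] using hyt⟩
    _ = _ := by push_cast; rfl

theorem isMA_of_forall_realize_comp {ι : Type} [Fintype ι] {γ : ι → Type}
    {φ : ∀ i, (L[[M]]).Formula (γ i)} (hφ : ∀ i, IsMA L M (φ i)) (g : ∀ i, γ i → β) (y : β)
    (hy : ∀ i, y ∈ range (g i)) (hcover : ∀ x, ∃ i, x ∈ range (g i))
    {χ : (L[[M]]).Formula β} (hχ : ∀ w : β → M, χ.Realize w → ∀ i, (φ i).Realize (w ∘ g i)) :
    IsMA L M χ := by
  choose N hN using fun i => (hφ i).exists_encard_le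
  have hfixed := encard_setOf_realize_eqOn_le_prod hN g y hy hcover hχ
  refine isMA_iff.2 ⟨(1 + ∑ i, N i) * ∏ i, N i, fun t ht _ w => ?_⟩
  by_cases hyt : y ∈ t
  · refine (hfixed t hyt w).trans ?_
    exact_mod_cast Nat.le_mul_of_pos_left _ (by omega)
  obtain ⟨x, hx⟩ := ht
  obtain ⟨i₀, x', rfl⟩ := hcover x
  obtain ⟨y', hy'⟩ := hy i₀
  have hvalues : ((fun z => z y) '' {z | χ.Realize z ∧ EqOn z w t}).encard ≤ N i₀ := by
    refine le_trans (encard_le_encard ?_)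
      ((encard_image_le (fun z => z y') _).trans (hN i₀ (g i₀ ⁻¹' t) ⟨x', hx⟩ (w ∘ g i₀)))
    rintro _ ⟨z, hz, rfl⟩
    exact ⟨z ∘ g i₀, ⟨hχ z hz.1 i₀, fun _ ha => hz.2 ha⟩, by simp [hy']⟩
  classical
  have hfiber : ∀ m, ({z | χ.Realize z ∧ EqOn z w t} ∩ (fun z => z y) ⁻¹' {m}).encard ≤
      ∏ i, N i := by
    intro m
    refine (encard_le_encard ?_).trans
      (hfixed (insert y t) (mem_insert y t) (Function.update w y m))
    rintro z ⟨⟨hz, hzw⟩, hzm⟩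
    refine ⟨hz, ?_⟩
    rintro a (rfl | ha)
    · simpa using hzm
    · rw [Function.update_of_ne (ne_of_mem_of_not_mem ha hyt)]; exact hzw ha
  refine (encard_le_mul_of_encard_fiber_le hvalues hfiber).trans ?_
  exact_mod_cast Nat.mul_le_mul_right _
    ((Finset.single_le_sum (fun i _ => Nat.zero_le (N i)) (Finset.mem_univ i₀)).trans
      (Nat.le_add_left _ _))

theorem IsMA.finite_setOf_realize_piecewise {φ : (L[[M]]).Formula β} (h : IsMA L M φ)
    {s : Set β} [DecidablePred (· ∈ s)] (hs : s.Nonempty) (hsc : sᶜ.Nonempty) (w : β → M) :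
    {c : M | φ.Realize (s.piecewise (fun _ => c) w)}.Finite := by
  obtain ⟨N, hN⟩ := h.exists_encard_le
  obtain ⟨x, hx⟩ := hs
  refine Finite.of_finite_image (f := fun c => s.piecewise (fun _ => c) w) ?_ ?_
  · refine (finite_of_encard_le_coe (hN sᶜ hsc w)).subset ?_
    rintro _ ⟨c, hc, rfl⟩
    exact ⟨hc, piecewise_eqOn_compl _ _ _⟩
  · intro c _ c' _ h
    simpa [piecewise_eq_of_mem _ _ _ hx] using congrFun h x

theorem exists_forall_not_realize_piecewise [Infinite M] {κ : Type} [Finite κ] {γ : κ → Type}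
    {φ : ∀ j, (L[[M]]).Formula (γ j)} (hφ : ∀ j, IsMA L M (φ j)) (s : ∀ j, Set (γ j))
    [∀ j, DecidablePred (· ∈ s j)] (hs : ∀ j, (s j).Nonempty) (hsc : ∀ j, (s j)ᶜ.Nonempty)
    (w : ∀ j, γ j → M) : ∃ c : M, ∀ j, ¬ (φ j).Realize ((s j).piecewise (fun _ => c) (w j)) := by
  obtain ⟨c, hc⟩ := (finite_iUnion fun j =>
    (hφ j).finite_setOf_realize_piecewise (hs j) (hsc j) (w j)).infinite_compl.nonempty
  exact ⟨c, fun j hj => hc (mem_iUnion.2 ⟨j, hj⟩)⟩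

theorem Formula.realize_of_forall_realize_of_model_elementaryDiagram [Finite β]
    {φ : (L[[M]]).Formula β} (hM : ∀ w : β → M, φ.Realize w) (N : Type) [(L[[M]]).Structure N]
    (hN : N ⊨ L.elementaryDiagram M) (w : β → N) : φ.Realize w := by
  let σ : (L[[M]]).Sentence := (φ.relabel Sum.inr).iAlls β
  have hσ : ∀ (P : Type) [(L[[M]]).Structure P], P ⊨ σ ↔ ∀ w : β → P, φ.Realize w := by
    intro P _
    simp [σ, Sentence.Realize, Formula.realize_iAlls, Formula.realize_relabel]
  exact (hσ N).1 (hN.realize_of_mem σ (mem_completeTheory.2 ((hσ M).2 hM))) w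

end MutualAlgebraicity

theorem Formula.realize_finsetIInf {L : Language} {α β : Type} {P : Type} [L.Structure P]
    {s : Finset β} {f : β → L.Formula α} {v : α → P} :
    Formula.Realize (finsetIInf s f) v ↔ ∀ b ∈ s, (f b).Realize v := by
  simp [finsetIInf, Formula.Realize, BoundedFormula.realize_foldr_inf]

theorem BoundedFormula.isQF_finsetIInf {L : Language} {α β : Type} {n : ℕ} {s : Finset β}
    {f : β → L.BoundedFormula α n} (h : ∀ b ∈ s, (f b).IsQF) : (finsetIInf s f).IsQF := by
  suffices ∀ l : List (L.BoundedFormula α n), (∀ φ ∈ l, φ.IsQF) → (l.foldr (· ⊓ ·) ⊤).IsQF by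
    refine this _ fun φ hφ => ?_
    obtain ⟨b, hb, rfl⟩ := List.mem_map.1 hφ
    exact h b (Finset.mem_toList.1 hb)
  intro l hl
  induction l with
  | nil => exact BoundedFormula.IsQF.top
  | cons φ l ih =>
    exact (hl φ List.mem_cons_self).inf (ih fun ψ hψ => hl ψ (List.mem_cons_of_mem _ hψ))

section Reduction

variable (L : Language) (M : Type) {α ι κ : Type} [Fintype ι] [Fintype κ]
  (sxI : ι → Set α) (sxJ : κ → Set α) (RI : ∀ i, (L[[M]]).Formula (↥(sxI i) ⊕ Unit))
  (RJ : ∀ j, (L[[M]]).Formula (↥(sxJ j) ⊕ Unit))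

-- `fullConj` is `ψ(x̄,y)` and `reducedConj` is `θ(x̄',y)`; the variable `y` is indexed by `Unit`.
noncomputable def fullConj : (L[[M]]).Formula (α ⊕ Unit) :=
  (finsetIInf Finset.univ fun i => (RI i).relabel (Sum.map Subtype.val id)) ⊓
    finsetIInf Finset.univ fun j => ((RJ j).relabel (Sum.map Subtype.val id)).not

open Classical in
noncomputable def reducedConj : (L[[M]]).Formula (↥(⋃ i, sxI i) ⊕ Unit) :=
  (finsetIInf Finset.univ fun i : ι =>
    (RI i).relabel (Sum.map (Set.inclusion (Set.subset_iUnion sxI i)) id)) ⊓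
  (finsetIInf Finset.univ fun j : κ =>
    if h : sxJ j ⊆ ⋃ i, sxI i then
      ((RJ j).relabel (Sum.map (Set.inclusion h) id)).not
    else ⊤)

variable {L M} {P : Type} [(L[[M]]).Structure P]

theorem realize_fullConj (w : α ⊕ Unit → P) :
    (fullConj L M sxI sxJ RI RJ).Realize w ↔
      (∀ i, (RI i).Realize (w ∘ Sum.map Subtype.val id)) ∧
        ∀ j, ¬ (RJ j).Realize (w ∘ Sum.map Subtype.val id) := by
  simp [fullConj, Formula.realize_finsetIInf, Formula.realize_relabel]

theorem realize_fullConj_elim (a : α → P) (b : P) :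
    (fullConj L M sxI sxJ RI RJ).Realize (Sum.elim a fun _ => b) ↔
      (∀ i, (RI i).Realize (Sum.elim (fun p : ↥(sxI i) => a ↑p) fun _ => b)) ∧
        ∀ j, ¬ (RJ j).Realize (Sum.elim (fun p : ↥(sxJ j) => a ↑p) fun _ => b) := by
  rw [realize_fullConj]
  simp only [Sum.elim_comp_map]
  rfl

theorem realize_reducedConj (w : ↥(⋃ i, sxI i) ⊕ Unit → P) :
    (reducedConj L M sxI sxJ RI RJ).Realize w ↔
      (∀ i, (RI i).Realize (w ∘ Sum.map (inclusion (subset_iUnion sxI i)) id)) ∧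
        ∀ j (h : sxJ j ⊆ ⋃ i, sxI i), ¬ (RJ j).Realize (w ∘ Sum.map (inclusion h) id) := by
  simp only [reducedConj, Formula.realize_inf, Formula.realize_finsetIInf, Finset.mem_univ,
    true_implies, Formula.realize_relabel]
  refine and_congr Iff.rfl (forall_congr' fun j => ?_)
  split_ifs with h <;> simp [h, Formula.realize_relabel]

theorem realize_reducedConj_comp (w : α ⊕ Unit → P) :
    (reducedConj L M sxI sxJ RI RJ).Realize (w ∘ Sum.map Subtype.val id) ↔
      (∀ i, (RI i).Realize (w ∘ Sum.map Subtype.val id)) ∧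
        ∀ j, sxJ j ⊆ ⋃ i, sxI i → ¬ (RJ j).Realize (w ∘ Sum.map Subtype.val id) := by
  simp [realize_reducedConj, Function.comp_assoc, Sum.map_comp_map, val_comp_inclusion]

theorem isQF_reducedConj (hqfI : ∀ i, (RI i).IsQF) (hqfJ : ∀ j, (RJ j).IsQF) :
    (reducedConj L M sxI sxJ RI RJ).IsQF := by
  refine (BoundedFormula.isQF_finsetIInf fun i _ => (hqfI i).relabel _).inf
    (BoundedFormula.isQF_finsetIInf fun j _ => ?_)
  split_ifs
  exacts [((hqfJ j).relabel _).not, BoundedFormula.IsQF.top]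

theorem isMA_reducedConj [L.Structure M] [Nonempty ι] (hMAI : ∀ i, IsMA L M (RI i)) :
    IsMA L M (reducedConj L M sxI sxJ RI RJ) := by
  have hy : ∀ i, Sum.inr () ∈ range (Sum.map (inclusion (subset_iUnion sxI i)) id) :=
    fun _ => ⟨Sum.inr (), rfl⟩
  refine isMA_of_forall_realize_comp hMAI _ (Sum.inr ()) hy ?_
    fun w hw => ((realize_reducedConj sxI sxJ RI RJ w).1 hw).1
  rintro (⟨a, ha⟩ | ⟨⟩)
  · obtain ⟨i, hi⟩ := mem_iUnion.1 ha
    exact ⟨i, Sum.inl ⟨a, hi⟩, rfl⟩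
  · exact ⟨Classical.arbitrary ι, hy _⟩

theorem realize_reducedConj_of_realize_fullConj {a : α → P} {b : P}
    (h : (fullConj L M sxI sxJ RI RJ).Realize (Sum.elim a fun _ => b)) :
    (reducedConj L M sxI sxJ RI RJ).Realize (Sum.elim (fun p => a p) fun _ => b) := by
  rw [realize_fullConj] at h
  have := (realize_reducedConj_comp sxI sxJ RI RJ _).2 ⟨h.1, fun j _ => h.2 j⟩
  rwa [Sum.elim_comp_map] at this

theorem exists_realize_fullConj_of_realize_reducedConj [L.Structure M] [Infinite M]
    (hMAJ : ∀ j, IsMA L M (RJ j)) {a' : ↥(⋃ i, sxI i) → M} {b : M}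
    (h : (reducedConj L M sxI sxJ RI RJ).Realize (Sum.elim a' fun _ => b)) :
    ∃ a : α → M, (fullConj L M sxI sxJ RI RJ).Realize (Sum.elim a fun _ => b) := by
  classical
  let W₀ : α ⊕ Unit → M := Sum.elim (Function.extend Subtype.val a' fun _ => b) fun _ => b
  let T : Set (α ⊕ Unit) := Sum.inl '' (⋃ i, sxI i)ᶜ
  have hT : ∀ j : {j // ¬ sxJ j ⊆ ⋃ i, sxI i},
      (Sum.map (Subtype.val : ↥(sxJ j) → α) id ⁻¹' T).Nonempty := by
    rintro ⟨j, hj⟩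
    obtain ⟨p, hpJ, hpU⟩ := not_subset.1 hj
    exact ⟨Sum.inl ⟨p, hpJ⟩, mem_image_of_mem Sum.inl hpU⟩
  have hTc : ∀ j : {j // ¬ sxJ j ⊆ ⋃ i, sxI i},
      (Sum.map (Subtype.val : ↥(sxJ j) → α) id ⁻¹' T)ᶜ.Nonempty :=
    fun _ => ⟨Sum.inr (), by simp [T]⟩
  obtain ⟨c, hc⟩ := exists_forall_not_realize_piecewise (fun j => hMAJ j.1) _ hT hTc
    fun j => W₀ ∘ Sum.map Subtype.val id
  let W := T.piecewise (fun _ => c) W₀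
  have hWU : W ∘ Sum.map Subtype.val id = Sum.elim a' fun _ => b := by
    funext x
    rcases x with p | ⟨⟩
    · have hp : (Sum.inl ↑p : α ⊕ Unit) ∉ T := fun ⟨q, hq, e⟩ => hq (Sum.inl_injective e ▸ p.2)
      simp [W, W₀, piecewise_eq_of_notMem _ _ _ hp]
    · simp [W, W₀, T]
  have hWb : Sum.elim (W ∘ Sum.inl) (fun _ => b) = W := by
    funext x
    rcases x with p | ⟨⟩
    · rfl
    · simp [W, W₀, T]
  refine ⟨W ∘ Sum.inl, ?_⟩
  rw [hWb, realize_fullConj]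
  rw [← hWU, realize_reducedConj_comp] at h
  refine ⟨h.1, fun j => ?_⟩
  by_cases hj : sxJ j ⊆ ⋃ i, sxI i
  · exact h.2 j hj
  · exact hc ⟨j, hj⟩

theorem exists_realize_iff_exists_realize_reducedConj [L.Structure M] [Infinite M] [Finite α]
    (hMAJ : ∀ j, IsMA L M (RJ j)) (N : Type) [(L[[M]]).Structure N]
    (hN : N ⊨ L.elementaryDiagram M) (b : N) :
    (∃ a : α → N,
        (∀ i, (RI i).Realize (Sum.elim (fun p : ↥(sxI i) => a ↑p) fun _ => b)) ∧
          ∀ j, ¬ (RJ j).Realize (Sum.elim (fun p : ↥(sxJ j) => a ↑p) fun _ => b)) ↔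
      ∃ a' : ↥(⋃ i, sxI i) → N,
        (reducedConj L M sxI sxJ RI RJ).Realize (Sum.elim a' fun _ => b) := by
  refine (exists_congr fun a => (realize_fullConj_elim sxI sxJ RI RJ a b).symm).trans
    ⟨fun ⟨a, ha⟩ => ⟨_, realize_reducedConj_of_realize_fullConj sxI sxJ RI RJ ha⟩, fun h => ?_⟩
  let χ : (L[[M]]).Formula Unit :=
    (((reducedConj L M sxI sxJ RI RJ).relabel Sum.swap).iExs _).imp
      (((fullConj L M sxI sxJ RI RJ).relabel Sum.swap).iExs α)
  have hχ : ∀ (P : Type) [(L[[M]]).Structure P] (c : P), χ.Realize (fun _ => c) ↔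
      ((∃ a', (reducedConj L M sxI sxJ RI RJ).Realize (Sum.elim a' fun _ => c)) →
        ∃ a, (fullConj L M sxI sxJ RI RJ).Realize (Sum.elim a fun _ => c)) := by
    intro P _ c
    simp [χ, Formula.realize_relabel, Sum.elim_swap]
  have hMχ : ∀ v : Unit → M, χ.Realize v := fun v => (hχ M (v ())).2 fun ⟨_, ha'⟩ =>
    exists_realize_fullConj_of_realize_reducedConj sxI sxJ RI RJ hMAJ ha'
  exact (hχ N _).1 (Formula.realize_of_forall_realize_of_model_elementaryDiagram hMχ N hN _) h

end Reduction

open Classical in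
theorem stmt10_general (L : Language) (M : Type) [L.Structure M] [Infinite M]
    {α : Type} [Finite α]
    {ι κ : Type} [Fintype ι] [Fintype κ] [Nonempty ι]
    (sxI : ι → Set α) (sxJ : κ → Set α)
    (RI : ∀ i : ι, (L[[M]]).Formula (↥(sxI i) ⊕ Unit))
    (RJ : ∀ j : κ, (L[[M]]).Formula (↥(sxJ j) ⊕ Unit))
    (hqfI : ∀ i, (RI i).IsQF) (hMAI : ∀ i, IsMA L M (RI i))
    (hqfJ : ∀ j, (RJ j).IsQF) (hMAJ : ∀ j, IsMA L M (RJ j)) :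
    let θ : (L[[M]]).Formula (↥(⋃ i, sxI i) ⊕ Unit) :=
      (finsetIInf Finset.univ fun i : ι =>
        (RI i).relabel (Sum.map (Set.inclusion (Set.subset_iUnion sxI i)) id)) ⊓
      (finsetIInf Finset.univ fun j : κ =>
        if h : sxJ j ⊆ ⋃ i, sxI i then
          ((RJ j).relabel (Sum.map (Set.inclusion h) id)).not
        else ⊤)
    θ.IsQF ∧ IsMA L M θ ∧
      ∀ (N : Type) [(L[[M]]).Structure N], N ⊨ L.elementaryDiagram M → ∀ b : N,
        ((∃ a : α → N,
            (∀ i : ι, (RI i).Realize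
              (Sum.elim (fun p : ↥(sxI i) => a ↑p) (fun _ => b))) ∧
            (∀ j : κ, ¬ (RJ j).Realize
              (Sum.elim (fun p : ↥(sxJ j) => a ↑p) (fun _ => b)))) ↔
          ∃ a' : ↥(⋃ i, sxI i) → N, θ.Realize (Sum.elim a' (fun _ => b))) := by
  intro θ
  exact ⟨isQF_reducedConj sxI sxJ RI RJ hqfI hqfJ, isMA_reducedConj sxI sxJ RI RJ hMAI,
    exists_realize_iff_exists_realize_reducedConj sxI sxJ RI RJ hMAJ⟩

open Classical in
/-- Lemma 2.3, case `I ≠ ∅`: with `ψ(x̄,y) = ⋀_{i∈I} R_i(x̄_i,y) ∧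
⋀_{j∈J} ¬R_j(x̄_j,y)`, `x̄'` the union of the `x̄_i` (`i ∈ I`), and
`K = {j ∈ J : x̄_j ⊆ x̄'}`, the formula `θ(x̄',y) = ⋀_{i∈I} R_i ∧ ⋀_{j∈K} ¬R_j` is
quantifier-free mutually algebraic, and `T(M) ⊨ ∀y (∃x̄ ψ(x̄,y) ↔ ∃x̄' θ(x̄',y))`. -/
theorem stmt10 (L : Language) (M : Type) [L.Structure M] [Infinite M]
    (hMA : IsMAStructure L M) {α : Type} [Finite α]
    {ι κ : Type} [Fintype ι] [Fintype κ] [Nonempty ι]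
    (sxI : ι → Set α) (sxJ : κ → Set α)
    (RI : ∀ i : ι, (L[[M]]).Formula (↥(sxI i) ⊕ Unit))
    (RJ : ∀ j : κ, (L[[M]]).Formula (↥(sxJ j) ⊕ Unit))
    (hqfI : ∀ i, (RI i).IsQF) (hMAI : ∀ i, IsMA L M (RI i))
    (hqfJ : ∀ j, (RJ j).IsQF) (hMAJ : ∀ j, IsMA L M (RJ j)) :
    let θ : (L[[M]]).Formula (↥(⋃ i, sxI i) ⊕ Unit) :=
      (finsetIInf Finset.univ fun i : ι =>
        (RI i).relabel (Sum.map (Set.inclusion (Set.subset_iUnion sxI i)) id)) ⊓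
      (finsetIInf Finset.univ fun j : κ =>
        if h : sxJ j ⊆ ⋃ i, sxI i then
          ((RJ j).relabel (Sum.map (Set.inclusion h) id)).not
        else ⊤)
    θ.IsQF ∧ IsMA L M θ ∧
      ∀ (N : Type) [(L[[M]]).Structure N], N ⊨ L.elementaryDiagram M → ∀ b : N,
        ((∃ a : α → N,
            (∀ i : ι, (RI i).Realize
              (Sum.elim (fun p : ↥(sxI i) => a ↑p) (fun _ => b))) ∧
            (∀ j : κ, ¬ (RJ j).Realize
              (Sum.elim (fun p : ↥(sxJ j) => a ↑p) (fun _ => b)))) ↔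
          ∃ a' : ↥(⋃ i, sxI i) → N, θ.Realize (Sum.elim a' (fun _ => b))) :=
  stmt10_general L M sxI sxJ RI RJ hqfI hMAI hqfJ hMAJ
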